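/- The count of k-free integers up to X coprime to q satisfies ∑_{n ≤ X, (n,q)=1} μ_k(n) = A_q·X + O_ε(τ(q) X^{1/k + ε}), where A_q = (φ(q)/q) ∏_{p ∤ q}(1 − p^{−k}). -/

import Mathlib

/-!
Write the indicator of `k`-free `n` as `∑_{d^k ∣ n} μ(d)` and swap the sums: for
`D = ⌊X^{1/k}⌋` the count becomes `∑_{d ≤ D, (d,q)=1} μ(d) · #{m ≤ X/d^k : (m,q)=1}`.
Möbius inversion over the divisors of `q` gives each inner count as `(φ(q)/q) X/d^k` with an
error at most `τ(q)`, so the errors add up to `τ(q) D`. Completing `∑_{d ≤ D, (d,q)=1} μ(d) d^{-k}`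
to the full series costs `X D^{1-k} ≪ X^{1/k}`, and by multiplicativity the full series is the
Euler product `∏_{p ∤ q} (1 - p^{-k})`.
-/

open Classical

open Finset ArithmeticFunction
open scoped ArithmeticFunction.Moebius

theorem sum_divisors_moebius {R : Type*} [Ring R] (n : ℕ) :
    ∑ d ∈ n.divisors, (μ d : R) = if n = 1 then 1 else 0 := by
  simpa only [coe_mul_zeta_apply, one_apply, intCoe_apply] using
    congrArg (fun f : ArithmeticFunction R => f n) coe_moebius_mul_coe_zeta

theorem abs_moebius_cast_le_one (n : ℕ) : |(μ n : ℝ)| ≤ 1 := by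
  exact_mod_cast abs_moebius_le_one

theorem sum_divisors_moebius_mul_div_eq_totient {q : ℕ} (hq : q ≠ 0) :
    ∑ e ∈ q.divisors, (μ e : ℝ) * (q / e : ℕ) = q.totient := by
  have h := (sum_eq_iff_sum_smul_moebius_eq (f := fun n => (n.totient : ℤ))
    (g := fun n => (n : ℤ))).mp (fun n _ => mod_cast n.sum_totient) q (Nat.pos_of_ne_zero hq)
  rw [Nat.sum_divisorsAntidiagonal (f := fun a b => μ a • (b : ℤ))] at h
  simpa only [smul_eq_mul, Int.cast_sum, Int.cast_mul, Int.cast_natCast] using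
    congrArg (Int.cast : ℤ → ℝ) h

def coprimeCount (q M : ℕ) : ℕ := #{m ∈ Icc 1 M | m.Coprime q}

theorem ite_coprime_eq_sum_moebius {q : ℕ} (hq : q ≠ 0) (m : ℕ) :
    (if m.Coprime q then 1 else 0 : ℝ) = ∑ e ∈ q.divisors with e ∣ m, (μ e : ℝ) := by
  have : {e ∈ q.divisors | e ∣ m} = {e ∈ q.divisors | e ∣ m.gcd q} :=
    filter_congr fun e he => by simp [Nat.dvd_gcd_iff, (Nat.mem_divisors.mp he).1]
  rw [this, Nat.divisors_filter_dvd_of_dvd hq (Nat.gcd_dvd_right m q), sum_divisors_moebius]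

theorem coprimeCount_eq_sum_moebius {q : ℕ} (hq : q ≠ 0) (M : ℕ) :
    (coprimeCount q M : ℝ) = ∑ e ∈ q.divisors, (μ e : ℝ) * (M / e : ℕ) := by
  rw [coprimeCount, natCast_card_filter, sum_congr rfl fun m _ => ite_coprime_eq_sum_moebius hq m]
  simp_rw [sum_filter]
  rw [sum_comm]
  refine sum_congr rfl fun e _ => ?_
  rw [← sum_filter, sum_const, nsmul_eq_mul, mul_comm, ← Nat.Ioc_filter_dvd_card_eq_div]
  rfl

theorem abs_coprimeCount_floor_sub_le {q : ℕ} (hq : q ≠ 0) {Y : ℝ} (hY : 0 ≤ Y) :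
    |(coprimeCount q ⌊Y⌋₊ : ℝ) - q.totient / q * Y| ≤ #q.divisors := by
  have hmain : (q.totient : ℝ) / q * Y = ∑ e ∈ q.divisors, (μ e : ℝ) * (Y / e) := by
    rw [← sum_divisors_moebius_mul_div_eq_totient hq, sum_div, sum_mul]
    refine sum_congr rfl fun e he => ?_
    obtain ⟨he, -⟩ := Nat.mem_divisors.mp he
    have he0 : (e : ℝ) ≠ 0 := by exact_mod_cast ne_zero_of_dvd_ne_zero hq he
    rw [Nat.cast_div he he0]
    field_simp
  rw [coprimeCount_eq_sum_moebius hq, hmain, ← sum_sub_distrib, card_eq_sum_ones, Nat.cast_sum]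
  refine (abs_sum_le_sum_abs _ _).trans (sum_le_sum fun e _ => ?_)
  rw [← mul_sub, abs_mul, ← Nat.floor_div_natCast, Nat.cast_one]
  have hfloor : |(⌊Y / e⌋₊ : ℝ) - Y / e| ≤ 1 := by
    rw [abs_sub_comm, abs_of_nonneg (by linarith [Nat.floor_le (by positivity : 0 ≤ Y / e)])]
    linarith [Nat.lt_floor_add_one (Y / e)]
  simpa using mul_le_mul (abs_moebius_cast_le_one e) hfloor (abs_nonneg _) zero_le_one

theorem sum_divisors_filter_pow_dvd_moebius {k n : ℕ} (hk : k ≠ 0) (hn : n ≠ 0) :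
    ∑ d ∈ n.divisors with d ^ k ∣ n, (μ d : ℝ) =
      if ∀ p : ℕ, p.Prime → ¬ p ^ k ∣ n then 1 else 0 := by
  -- The squarefree `d` with `d ^ k ∣ n` are exactly the divisors of the product `r` of the
  -- primes `p` with `p ^ k ∣ n`, and `r = 1` iff `n` is `k`-free.
  set s := {p ∈ n.primeFactors | p ^ k ∣ n}
  set r := ∏ p ∈ s, p
  have hs : ∀ p ∈ s, p.Prime := fun p hp => Nat.prime_of_mem_primeFactors (mem_filter.mp hp).1
  have hcop : ∀ p ∈ s, ∀ p' ∈ s, p ≠ p' → p.Coprime p' := fun p hp p' hp' hne =>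
    (Nat.coprime_primes (hs p hp) (hs p' hp')).mpr hne
  have hr : Squarefree r := Finset.squarefree_prod_of_pairwise_isCoprime
    (fun p hp p' hp' hne => Nat.coprime_iff_isRelPrime.mp (hcop p hp p' hp' hne))
    fun p hp => (hs p hp).prime.squarefree
  have hrk : r ^ k ∣ n := by
    rw [← prod_pow]
    exact prod_dvd_of_isRelPrime
      (fun p hp p' hp' hne => Nat.coprime_iff_isRelPrime.mp ((hcop p hp p' hp' hne).pow k k))
      fun p hp => (mem_filter.mp hp).2
  have hdvd_r : ∀ d, d ∣ r ↔ Squarefree d ∧ d ^ k ∣ n := fun d =>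
    ⟨fun hd => ⟨hr.squarefree_of_dvd hd, (pow_dvd_pow_of_dvd hd k).trans hrk⟩,
     fun ⟨hsq, hdk⟩ => by
      rw [← Nat.prod_primeFactors_of_squarefree hsq]
      refine prod_dvd_prod_of_subset _ _ _ fun p hp => mem_filter.mpr ⟨?_, ?_⟩
      · exact Nat.primeFactors_mono ((dvd_pow_self d hk).trans hdk) hn hp
      · exact (pow_dvd_pow_of_dvd (Nat.dvd_of_mem_primeFactors hp) k).trans hdk⟩
  have hr_eq_one : r = 1 ↔ ∀ p : ℕ, p.Prime → ¬ p ^ k ∣ n := by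
    refine ⟨fun h p hp hpk => hp.not_dvd_one ?_, fun h => ?_⟩
    · exact h ▸ (hdvd_r p).mpr ⟨hp.squarefree, hpk⟩
    · exact prod_eq_one fun p hp => absurd (mem_filter.mp hp).2 (h p (hs p hp))
  have hsupp : r.divisors ⊆ {d ∈ n.divisors | d ^ k ∣ n} := fun d hd => by
    have hdk := ((hdvd_r d).mp (Nat.dvd_of_mem_divisors hd)).2
    exact mem_filter.mpr ⟨Nat.mem_divisors.mpr ⟨(dvd_pow_self d hk).trans hdk, hn⟩, hdk⟩
  rw [← sum_subset hsupp fun d hd hdr => ?_, sum_divisors_moebius]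
  · exact if_congr hr_eq_one rfl rfl
  · rw [moebius_eq_zero_of_not_squarefree fun hsq => hdr (Nat.mem_divisors.mpr
      ⟨(hdvd_r d).mpr ⟨hsq, (mem_filter.mp hd).2⟩, hr.ne_zero⟩), Int.cast_zero]

theorem card_filter_dvd_coprime {a : ℕ} (ha : 0 < a) (q N : ℕ) :
    #{n ∈ Icc 1 N | a ∣ n ∧ n.Coprime q} = if a.Coprime q then coprimeCount q (N / a) else 0 := by
  split_ifs with haq
  · refine card_nbij' (· / a) (a * ·) (fun n hn => ?_) (fun m hm => ?_)
      (fun n hn => Nat.mul_div_cancel' (mem_filter.mp hn).2.1)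
      (fun m _ => Nat.mul_div_cancel_left m ha)
    · simp only [coe_filter, Set.mem_ofPred_eq, mem_Icc] at hn ⊢
      obtain ⟨⟨hn1, hnN⟩, ⟨c, rfl⟩, hcop⟩ := hn
      rw [Nat.mul_div_cancel_left c ha]
      exact ⟨⟨Nat.pos_of_mul_pos_left hn1, (Nat.le_div_iff_mul_le ha).mpr (by rwa [mul_comm])⟩,
        Nat.Coprime.coprime_dvd_left (dvd_mul_left c a) hcop⟩
    · simp only [coe_filter, Set.mem_ofPred_eq, mem_Icc] at hm ⊢
      obtain ⟨⟨hm1, hmN⟩, hcop⟩ := hm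
      exact ⟨⟨Nat.mul_pos ha hm1, by rw [mul_comm]; exact (Nat.le_div_iff_mul_le ha).mp hmN⟩,
        dvd_mul_right a m, haq.mul_left hcop⟩
  · refine card_eq_zero.mpr (filter_eq_empty_iff.mpr fun n _ ⟨han, hcop⟩ => haq ?_)
    exact Nat.Coprime.coprime_dvd_left han hcop

noncomputable def moebiusCoprime (q d : ℕ) : ℝ := if d.Coprime q then μ d else 0

theorem abs_moebiusCoprime_le_one (q d : ℕ) : |moebiusCoprime q d| ≤ 1 := by
  unfold moebiusCoprime
  split_ifs
  · exact abs_moebius_cast_le_one d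
  · simp

theorem sum_kFree_coprime_eq_sum_moebiusCoprime {k D : ℕ} (hk : k ≠ 0) (q : ℕ) {N : ℕ}
    (hND : N < (D + 1) ^ k) :
    ∑ n ∈ Icc 1 N, (if n.gcd q = 1 ∧ ∀ p : ℕ, p.Prime → ¬ p ^ k ∣ n then (1 : ℝ) else 0) =
      ∑ d ∈ Icc 1 D, moebiusCoprime q d * coprimeCount q (N / d ^ k) := by
  have hdivisors : ∀ n ∈ Icc 1 N,
      {d ∈ n.divisors | d ^ k ∣ n} = {d ∈ Icc 1 D | d ^ k ∣ n} := fun n hn => by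
    obtain ⟨hn1, hnN⟩ := mem_Icc.mp hn
    ext d
    simp only [mem_filter, Nat.mem_divisors, mem_Icc, and_congr_left_iff]
    intro hdk
    have hdn : d ∣ n := (dvd_pow_self d hk).trans hdk
    have hd0 : 0 < d := Nat.pos_of_dvd_of_pos hdn hn1
    have hdD : d < D + 1 := (Nat.pow_lt_pow_iff_left hk).mp
      ((Nat.le_of_dvd hn1 hdk).trans hnN |>.trans_lt hND)
    exact ⟨fun _ => ⟨hd0, by omega⟩, fun _ => ⟨hdn, by omega⟩⟩
  have hindicator : ∀ n ∈ Icc 1 N,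
      (if n.gcd q = 1 ∧ ∀ p : ℕ, p.Prime → ¬ p ^ k ∣ n then (1 : ℝ) else 0) =
        ∑ d ∈ Icc 1 D, if d ^ k ∣ n ∧ n.Coprime q then (μ d : ℝ) else 0 := fun n hn => by
    rw [ite_and, ← sum_divisors_filter_pow_dvd_moebius hk (by grind), hdivisors n hn,
      sum_filter]
    split_ifs with hcop <;> simp [Nat.Coprime, hcop]
  rw [sum_congr rfl hindicator, sum_comm]
  refine sum_congr rfl fun d hd => ?_
  have hdk : 0 < d ^ k := pow_pos (mem_Icc.mp hd).1 k
  rw [← sum_filter, sum_const, nsmul_eq_mul, card_filter_dvd_coprime hdk, moebiusCoprime]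
  simp only [Nat.coprime_pow_left_iff (Nat.pos_of_ne_zero hk)]
  split_ifs <;> simp [mul_comm]

theorem sum_range_inv_pow_add_le {k D : ℕ} (hk : 2 ≤ k) (hD : D ≠ 0) (n : ℕ) :
    ∑ i ∈ range n, (((i + (D + 1) : ℕ) : ℝ) ^ k)⁻¹ ≤ ((D : ℝ) ^ (k - 1))⁻¹ := by
  have hD0 : (0 : ℝ) < D := by exact_mod_cast Nat.pos_of_ne_zero hD
  have hterm : ∀ j : ℕ, D ≤ j → ((j : ℝ) ^ k)⁻¹ ≤ ((D : ℝ) ^ (k - 2))⁻¹ * ((j : ℝ) ^ 2)⁻¹ := by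
    intro j hj
    have hDj : (D : ℝ) ≤ j := by exact_mod_cast hj
    rw [← mul_inv, ← pow_sub_mul_pow (j : ℝ) hk]
    apply inv_anti₀ (mul_pos (pow_pos hD0 _) (pow_pos (hD0.trans_le hDj) _))
    gcongr
  calc ∑ i ∈ range n, (((i + (D + 1) : ℕ) : ℝ) ^ k)⁻¹
      ≤ ∑ i ∈ range n, ((D : ℝ) ^ (k - 2))⁻¹ * (((i + (D + 1) : ℕ) : ℝ) ^ 2)⁻¹ :=
        sum_le_sum fun i _ => hterm _ (by omega)
    _ = ((D : ℝ) ^ (k - 2))⁻¹ * ∑ j ∈ Ioc D (n + D), ((j : ℝ) ^ 2)⁻¹ := by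
        rw [← mul_sum, range_eq_Ico, sum_Ico_add' (fun j : ℕ => ((j : ℝ) ^ 2)⁻¹), zero_add,
          ← add_assoc, Ico_add_one_add_one_eq_Ioc]
    _ ≤ ((D : ℝ) ^ (k - 2))⁻¹ * (D : ℝ)⁻¹ := by
        gcongr
        exact (sum_Ioc_inv_sq_le_sub hD (by omega)).trans (sub_le_self _ (by positivity))
    _ = ((D : ℝ) ^ (k - 1))⁻¹ := by
        rw [← mul_inv, ← pow_succ]
        congr 2
        omega

theorem abs_tsum_sub_sum_Icc_le {k D : ℕ} (hk : 2 ≤ k) (hD : D ≠ 0) {f : ℕ → ℝ} (hf₀ : f 0 = 0)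
    (hf : ∀ d, |f d| ≤ ((d : ℝ) ^ k)⁻¹) :
    |∑' d, f d - ∑ d ∈ Icc 1 D, f d| ≤ ((D : ℝ) ^ (k - 1))⁻¹ := by
  have hsum : Summable f := (Real.summable_nat_pow_inv.mpr hk).of_norm_bounded hf
  have hIcc : ∑ d ∈ range (D + 1), f d = ∑ d ∈ Icc 1 D, f d := by
    rw [range_eq_Ico, Ico_add_one_right_eq_Icc, Icc_eq_cons_Ioc (Nat.zero_le D), sum_cons, hf₀,
      zero_add, ← Icc_add_one_left_eq_Ioc, zero_add]
  rw [← hsum.sum_add_tsum_nat_add (D + 1), hIcc, add_sub_cancel_left, ← Real.norm_eq_abs]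
  have htail : Summable fun i : ℕ => (((i + (D + 1) : ℕ) : ℝ) ^ k)⁻¹ :=
    (summable_nat_add_iff (f := fun d : ℕ => ((d : ℝ) ^ k)⁻¹) (D + 1)).mpr
      (Real.summable_nat_pow_inv.mpr hk)
  exact (tsum_of_norm_bounded htail.hasSum fun i => (Real.norm_eq_abs _).trans_le (hf _)).trans
    (Real.tsum_le_of_sum_range_le (fun _ => by positivity) (sum_range_inv_pow_add_le hk hD))

theorem moebiusCoprime_mul (q : ℕ) {m n : ℕ} (h : m.Coprime n) :
    moebiusCoprime q (m * n) = moebiusCoprime q m * moebiusCoprime q n := by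
  simp only [moebiusCoprime, Nat.coprime_mul_iff_left,
    isMultiplicative_moebius.map_mul_of_coprime h, Int.cast_mul]
  split_ifs <;> simp_all

theorem moebiusCoprime_prime_pow {q p e : ℕ} (hp : p.Prime) (he : e ≠ 0) :
    moebiusCoprime q (p ^ e) = if p ∣ q ∨ e ≠ 1 then 0 else -1 := by
  simp only [moebiusCoprime, Nat.coprime_pow_left_iff (Nat.pos_of_ne_zero he),
    hp.coprime_iff_not_dvd, moebius_apply_prime_pow hp he]
  split_ifs <;> simp_all

theorem abs_moebiusCoprime_div_pow_le (q k d : ℕ) :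
    |moebiusCoprime q d / (d : ℝ) ^ k| ≤ ((d : ℝ) ^ k)⁻¹ := by
  rw [abs_div, div_eq_mul_inv, abs_of_nonneg (by positivity : (0 : ℝ) ≤ (d : ℝ) ^ k)]
  exact mul_le_of_le_one_left (by positivity) (abs_moebiusCoprime_le_one q d)

theorem tsum_moebiusCoprime_prime_pow_div_pow {p : ℕ} (hp : p.Prime) (q k : ℕ) :
    ∑' e, moebiusCoprime q (p ^ e) / ((p ^ e : ℕ) : ℝ) ^ k =
      if p ∣ q then 1 else 1 - ((p : ℝ) ^ k)⁻¹ := by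
  rw [tsum_eq_sum (s := range 2) fun e he => by
    rw [moebiusCoprime_prime_pow hp (by grind), if_pos (by grind), zero_div]]
  rw [sum_range_succ, sum_range_one, moebiusCoprime_prime_pow hp one_ne_zero]
  split_ifs <;> simp_all [moebiusCoprime, div_eq_mul_inv, ← sub_eq_add_neg]

theorem tprod_eq_tsum_moebiusCoprime_div_pow {k : ℕ} (hk : 2 ≤ k) (q : ℕ) :
    (∏' p : Nat.Primes, if (p : ℕ) ∣ q then (1 : ℝ) else 1 - (((p : ℕ) : ℝ) ^ k)⁻¹) =
      ∑' d, moebiusCoprime q d / (d : ℝ) ^ k := by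
  rw [← EulerProduct.eulerProduct_tprod (f := fun d => moebiusCoprime q d / (d : ℝ) ^ k)
    (by simp [moebiusCoprime])
    (fun {m n} h => by simp only [moebiusCoprime_mul q h]; push_cast; ring)
    ((Real.summable_nat_pow_inv.mpr hk).of_nonneg_of_le (fun _ => norm_nonneg _)
      (abs_moebiusCoprime_div_pow_le q k)) (by simp [moebiusCoprime])]
  exact tprod_congr fun p => (tsum_moebiusCoprime_prime_pow_div_pow p.prop q k).symm

theorem abs_sum_kFree_coprime_sub_le {k : ℕ} (hk : 2 ≤ k) {q : ℕ} (hq : q ≠ 0) {X : ℝ}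
    (hX : 0 ≤ X) {D : ℕ} (hD : D ≠ 0) (hXD : X < ((D : ℝ) + 1) ^ k) :
    |∑ n ∈ Icc 1 ⌊X⌋₊, (if n.gcd q = 1 ∧ ∀ p : ℕ, p.Prime → ¬ p ^ k ∣ n then (1 : ℝ) else 0)
        - q.totient / q * (∑' d, moebiusCoprime q d / (d : ℝ) ^ k) * X|
      ≤ #q.divisors * D + X / (D : ℝ) ^ (k - 1) := by
  set c : ℝ := q.totient / q
  have hc : c ≤ 1 := div_le_one_of_le₀ (by exact_mod_cast q.totient_le) (Nat.cast_nonneg q)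
  have hND : ⌊X⌋₊ < (D + 1) ^ k := (Nat.floor_lt hX).mpr (by push_cast; exact hXD)
  rw [sum_kFree_coprime_eq_sum_moebiusCoprime (by omega) q hND]
  have hcount : |∑ d ∈ Icc 1 D, moebiusCoprime q d * coprimeCount q (⌊X⌋₊ / d ^ k)
      - c * X * ∑ d ∈ Icc 1 D, moebiusCoprime q d / (d : ℝ) ^ k| ≤ #q.divisors * D := by
    rw [mul_sum, ← sum_sub_distrib]
    refine (abs_sum_le_sum_abs _ _).trans ((sum_le_sum (g := fun _ => (#q.divisors : ℝ))
      fun d _ => ?_).trans_eq (by simp [mul_comm]))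
    rw [← Nat.floor_div_natCast, Nat.cast_pow,
      show c * X * (moebiusCoprime q d / (d : ℝ) ^ k) = moebiusCoprime q d * (c * (X / (d : ℝ) ^ k))
        by ring, ← mul_sub, abs_mul]
    exact (mul_le_of_le_one_left (abs_nonneg _) (abs_moebiusCoprime_le_one q d)).trans
      (abs_coprimeCount_floor_sub_le hq (by positivity))
  have htail : |c * X * ∑ d ∈ Icc 1 D, moebiusCoprime q d / (d : ℝ) ^ k
      - c * (∑' d, moebiusCoprime q d / (d : ℝ) ^ k) * X| ≤ X / (D : ℝ) ^ (k - 1) := by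
    rw [show ∀ a b : ℝ, c * X * a - c * b * X = c * X * -(b - a) by intros; ring, abs_mul, abs_neg,
      abs_of_nonneg (by positivity), div_eq_mul_inv]
    exact mul_le_mul (mul_le_of_le_one_left hX hc)
      (abs_tsum_sub_sum_Icc_le hk hD (by simp [moebiusCoprime]) (abs_moebiusCoprime_div_pow_le q k))
      (abs_nonneg _) hX
  linarith [abs_sub_le (∑ d ∈ Icc 1 D, moebiusCoprime q d * coprimeCount q (⌊X⌋₊ / d ^ k))
    (c * X * ∑ d ∈ Icc 1 D, moebiusCoprime q d / (d : ℝ) ^ k)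
    (c * (∑' d, moebiusCoprime q d / (d : ℝ) ^ k) * X)]

theorem mul_floor_add_pow_div_floor_pow_le {k : ℕ} (hk : k ≠ 0) {Y τ : ℝ} (hY : 1 ≤ Y)
    (hτ : 1 ≤ τ) : τ * ⌊Y⌋₊ + Y ^ k / (⌊Y⌋₊ : ℝ) ^ (k - 1) ≤ 2 ^ k * τ * Y := by
  have hD1 : (1 : ℝ) ≤ ⌊Y⌋₊ := by exact_mod_cast Nat.one_le_floor_iff Y |>.mpr hY
  have hDY : (⌊Y⌋₊ : ℝ) ≤ Y := Nat.floor_le (by linarith)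
  have hYD : Y / 2 ≤ ⌊Y⌋₊ := by linarith [Nat.lt_floor_add_one Y]
  have hpow : Y ^ k / (⌊Y⌋₊ : ℝ) ^ (k - 1) ≤ 2 ^ (k - 1) * Y :=
    calc Y ^ k / (⌊Y⌋₊ : ℝ) ^ (k - 1) ≤ Y ^ k / (Y / 2) ^ (k - 1) := by gcongr
      _ = 2 ^ (k - 1) * Y := by
        rw [← pow_sub_mul_pow Y (Nat.one_le_iff_ne_zero.mpr hk), div_pow]
        field_simp
  have h2k : (1 : ℝ) + 2 ^ (k - 1) ≤ 2 ^ k := by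
    rw [← pow_sub_mul_pow (2 : ℝ) (Nat.one_le_iff_ne_zero.mpr hk)]
    linarith [one_le_pow₀ (M₀ := ℝ) (n := k - 1) one_le_two]
  calc τ * ⌊Y⌋₊ + Y ^ k / (⌊Y⌋₊ : ℝ) ^ (k - 1) ≤ τ * Y + 2 ^ (k - 1) * (τ * Y) := by
        gcongr
        exact hpow.trans (by gcongr; exact le_mul_of_one_le_left (by linarith) hτ)
    _ = (1 + 2 ^ (k - 1)) * τ * Y := by ring
    _ ≤ 2 ^ k * τ * Y := by gcongr

/-- ∑_{n ≤ X, (n,q)=1} μ_k(n) = A_q X + O_ε(τ(q) X^{1/k+ε}),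
with A_q = (φ(q)/q) ∏_{p ∤ q} (1 - p^{-k}). -/
theorem stmt_18 (k : ℕ) (hk : 2 ≤ k) (ε : ℝ) (hε : 0 < ε) :
    ∃ C : ℝ, 0 < C ∧ ∀ q : ℕ, 0 < q → ∀ X : ℝ, 1 ≤ X →
      |(∑ n ∈ Finset.Icc 1 ⌊X⌋₊,
          if Nat.gcd n q = 1 ∧ ∀ p : ℕ, p.Prime → ¬ p ^ k ∣ n then (1 : ℝ) else 0)
        - (q.totient : ℝ) / q * (∏' p : Nat.Primes,
            if (p : ℕ) ∣ q then 1 else 1 - (((p : ℕ) : ℝ) ^ k)⁻¹) * X|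
        ≤ C * (q.divisors.card : ℝ) * X ^ ((1 : ℝ) / k + ε) := by
  refine ⟨2 ^ k, by positivity, fun q hq X hX => ?_⟩
  have hk0 : k ≠ 0 := by omega
  set Y := X ^ ((1 : ℝ) / k)
  have hY : 1 ≤ Y := Real.one_le_rpow hX (by positivity)
  have hYk : Y ^ k = X := by
    rw [← Real.rpow_natCast, ← Real.rpow_mul (by linarith), one_div_mul_cancel (by positivity),
      Real.rpow_one]
  have hτ : (1 : ℝ) ≤ #q.divisors := by
    exact_mod_cast Finset.card_pos.mpr (Nat.nonempty_divisors.mpr hq.ne')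
  have hXD : X < ((⌊Y⌋₊ : ℝ) + 1) ^ k :=
    hYk ▸ pow_lt_pow_left₀ (Nat.lt_floor_add_one Y) (by linarith) hk0
  rw [tprod_eq_tsum_moebiusCoprime_div_pow hk]
  calc _ ≤ #q.divisors * ⌊Y⌋₊ + X / (⌊Y⌋₊ : ℝ) ^ (k - 1) :=
        abs_sum_kFree_coprime_sub_le hk hq.ne' (by linarith) (Nat.floor_pos.mpr hY).ne' hXD
    _ ≤ 2 ^ k * #q.divisors * Y := hYk ▸ mul_floor_add_pow_div_floor_pow_le hk0 hY hτ
    _ ≤ 2 ^ k * #q.divisors * X ^ ((1 : ℝ) / k + ε) := by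
        gcongr
        exact Real.rpow_le_rpow_of_exponent_le hX (by linarith)
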